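/- Let G be a group, A a G-module, α : G^3 → A. Define operations on T(g,h) = A × {(g,h)} by m((a,(g,h^{-1})),(b,(h,k^{-1})),(c,(h^{-1}g,k^{-1}h))) = (a + (g^{-1}h)b + c + α(g^{-1}h, h^{-1}k, k^{-1}), (g,k^{-1})), P((a,(g,h^{-1}))) = (ga,(h^{-1},g^{-1}h)), Q((a,(g,h^{-1}))) = (-ga,(g^{-1},h^{-1}g)). Then the compatibility P(m(a,b,c)) = m(P(b),P(c),P(a)) holds for all admissible triples if and only if g·α(g^{-1}h, h^{-1}k, k^{-1}) = α(h, h^{-1}g, g^{-1}k) for all g,h,k ∈ G. -/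
import Mathlib
set_option maxRecDepth 8000


variable {G A : Type} [Group G] [AddCommGroup A] [DistribMulAction G A]

/- The α-twisted structure `T(G,A,α)`: an element of `T(g,h⁻¹)` is `(a,(g,h⁻¹))` with
`a ∈ A`; operations are recorded by their `A`-component together with the indices. -/

/-- `m((a,(g,h⁻¹)),(b,(h,k⁻¹)),(c,(h⁻¹g,k⁻¹h))) =
  (a + (g⁻¹h)b + c + α(g⁻¹h,h⁻¹k,k⁻¹), (g,k⁻¹))`. -/
def mTw (α : G → G → G → A) (g h k : G) (a b c : A) : A :=
  a + (g⁻¹ * h) • b + c + α (g⁻¹ * h) (h⁻¹ * k) k⁻¹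

/-- `P((a,(g,h⁻¹))) = (g•a, (h⁻¹,g⁻¹h))`. -/
def pTw (g : G) (a : A) : A := g • a

/-- The compatibility `P(m(a,b,c)) = m(P(b),P(c),P(a))` holds in `T(G,A,α)` if and only if
`g•α(g⁻¹h, h⁻¹k, k⁻¹) = α(h, h⁻¹g, g⁻¹k)` for all `g,h,k ∈ G`. -/
theorem P_compat_iff (α : G → G → G → A) :
    (∀ (g h k : G) (a b c : A),
        pTw g (mTw α g h k a b c) =
          mTw α k⁻¹ (k⁻¹ * h) (k⁻¹ * g) (pTw h b) (pTw (h⁻¹ * g) c) (pTw g a)) ↔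
      (∀ g h k : G, g • α (g⁻¹ * h) (h⁻¹ * k) k⁻¹ = α h (h⁻¹ * g) (g⁻¹ * k)) := by
  constructor
  · intro H g h k
    have h0 := H g h k 0 0 0
    simp only [mTw, pTw, smul_zero, zero_add, add_zero] at h0
    rw [show (k⁻¹)⁻¹ * (k⁻¹ * h) = h by group,
        show (k⁻¹ * h)⁻¹ * (k⁻¹ * g) = h⁻¹ * g by group,
        show (k⁻¹ * g)⁻¹ = g⁻¹ * k by group] at h0
    exact h0
  · intro H g h k a b c
    simp only [mTw, pTw, smul_add, mul_smul]
    rw [show (k⁻¹)⁻¹ * (k⁻¹ * h) = h by group,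
        show (k⁻¹ * h)⁻¹ * (k⁻¹ * g) = h⁻¹ * g by group,
        show (k⁻¹ * g)⁻¹ = g⁻¹ * k by group, ← H g h k]
    simp only [smul_inv_smul, inv_inv]
    abel
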